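/- Let p be a prime and let G be a pℰ-group with exp(G/G') = p^r. Then the subgroup generated by the p^r-th powers of elements of the second center Z_2(G) equals Z(G) ∩ G^{p^r}, where G^{p^r} is the subgroup generated by all p^r-th powers of elements of G. In particular, if G is nilpotent of class exactly 3, then the exponent of Z_2(G)/Z(G) equals 3^r. -/

import Mathlib

open scoped commutatorElement

/-- For a prime `p`, a finite `p`-group `G` is a `pℰ`-group if it is a 2-Engel
group and there is `r ≥ 0` with `Ω_r(G) ≤ Z(G)` and `exp (G/G') = p ^ r`,
where `Ω_r(G)` is the subgroup generated by the elements `x` with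
`x ^ (p ^ r) = 1`. -/
def IsPEpsilonGroup (p : ℕ) (G : Type*) [Group G] : Prop :=
  IsPGroup p G ∧ (∀ x y : G, ⁅⁅x, y⁆, y⁆ = 1) ∧
    ∃ r : ℕ, Subgroup.closure {x : G | x ^ p ^ r = 1} ≤ Subgroup.center G ∧
      Monoid.exponent (G ⧸ commutator G) = p ^ r

namespace PEaux

open Subgroup

variable {G : Type*} [Group G]

private lemma closure_comm' {k : Set G} (h : ∀ x ∈ k, ∀ y ∈ k, x*y = y*x) {a b : G}
    (ha : a ∈ closure k) (hb : b ∈ closure k) : Commute a b :=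
  Set.centralizer_centralizer_comm_of_comm h a (closure_le_centralizer_centralizer k ha)
    b (closure_le_centralizer_centralizer k hb)

private lemma cancel_left {A B : G} (h : A * B = 1) : B = A⁻¹ := by
  rw [← one_mul B, ← inv_mul_cancel A, mul_assoc, h, mul_one]

-- membership helpers for A_x := normalClosure {x}
private lemma mem_nc_self (x : G) : x ∈ Subgroup.normalClosure ({x} : Set G) :=
  subset_normalClosure rfl

private lemma mem_nc_conj {x a : G} (ha : a ∈ Subgroup.normalClosure ({x} : Set G)) (g : G) :
    g * a * g⁻¹ ∈ Subgroup.normalClosure ({x} : Set G) :=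
  Subgroup.normalClosure_normal.conj_mem a ha g

private lemma mem_nc_commutator {x a : G} (ha : a ∈ Subgroup.normalClosure ({x} : Set G)) (g : G) :
    ⁅a, g⁆ ∈ Subgroup.normalClosure ({x} : Set G) := by
  have : ⁅a,g⁆ = a * (g * a⁻¹ * g⁻¹) := by group
  rw [this]
  exact mul_mem ha (mem_nc_conj (inv_mem ha) g)

private lemma mem_nc_commutator' {x a : G} (ha : a ∈ Subgroup.normalClosure ({x} : Set G)) (g : G) :
    ⁅g, a⁆ ∈ Subgroup.normalClosure ({x} : Set G) := by
  have : ⁅g,a⁆ = (g * a * g⁻¹) * a⁻¹ := by group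
  rw [this]
  exact mul_mem (mem_nc_conj ha g) (inv_mem ha)

section Engel
variable (hE : ∀ x y : G, ⁅⁅x, y⁆, y⁆ = 1)
include hE

private lemma commRight (a b : G) : Commute ⁅a,b⁆ b :=
  commutatorElement_eq_one_iff_commute.mp (hE a b)

private lemma conj_commute (a k : G) : Commute a (k*a*k⁻¹) := by
  have h1 : Commute ⁅k,a⁆ a := commRight hE k a
  have : k*a*k⁻¹ = ⁅k,a⁆ * a := by group
  rw [this]
  exact (h1.symm.mul_right (Commute.refl a))

private lemma commLeft (a b : G) : Commute ⁅a,b⁆ a := by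
  have h1 : Commute a ((b*a*b⁻¹)⁻¹) := (conj_commute hE a b).inv_right
  have e : (b*a*b⁻¹)⁻¹ = b*a⁻¹*b⁻¹ := by group
  rw [e] at h1
  have : ⁅a,b⁆ = a * (b*a⁻¹*b⁻¹) := by group
  rw [this]
  exact ((Commute.refl a).mul_right h1).symm

private lemma nc_comm {x a b : G} (ha : a ∈ Subgroup.normalClosure ({x} : Set G))
    (hb : b ∈ Subgroup.normalClosure ({x} : Set G)) : Commute a b := by
  refine closure_comm' ?_ ha hb
  intro u hu v hv
  rw [Group.mem_conjugatesOfSet_iff] at hu hv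
  obtain ⟨u', hu', hcu⟩ := hu
  obtain ⟨v', hv', hcv⟩ := hv
  rw [Set.mem_singleton_iff] at hu' hv'
  rw [hu'] at hcu; rw [hv'] at hcv
  rw [isConj_iff] at hcu hcv
  obtain ⟨c, rfl⟩ := hcu
  obtain ⟨d, rfl⟩ := hcv
  have h1 : Commute x ((c⁻¹*d) * x * (c⁻¹*d)⁻¹) := conj_commute hE x _
  have h2 := (Commute.conj_iff c).mpr h1
  have e : c * (c⁻¹ * d * x * (c⁻¹ * d)⁻¹) * c⁻¹ = d * x * d⁻¹ := by group
  rw [e] at h2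
  exact h2

private lemma comm_mem_ncL (x y : G) : ⁅x,y⁆ ∈ Subgroup.normalClosure ({x} : Set G) :=
  mem_nc_commutator (mem_nc_self x) y

private lemma comm_mem_ncR (x y : G) : ⁅x,y⁆ ∈ Subgroup.normalClosure ({y} : Set G) :=
  mem_nc_commutator' (mem_nc_self y) x

private lemma star (x y z : G) : ⁅⁅x,y⁆,z⁆ = z * ⁅⁅x,z⁆,y⁆⁻¹ * z⁻¹ := by
  have h0 := hE x (y*z)
  have hfree : ⁅⁅x, y*z⁆, y*z⁆ =
      ⁅x,y⁆ * (y * (⁅⁅x,z⁆,z⁆ * (z * ⁅⁅x,z⁆,y⁆ * z⁻¹)) * y⁻¹) * ⁅x,y⁆⁻¹ *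
        (⁅⁅x,y⁆,y⁆ * (y * ⁅⁅x,y⁆,z⁆ * y⁻¹)) := by group
  rw [hfree, hE x z, hE x y, one_mul, one_mul] at h0
  have hc : Commute ⁅x,y⁆ (y * (z * ⁅⁅x,z⁆,y⁆ * z⁻¹) * y⁻¹) :=
    nc_comm hE (x := x) (comm_mem_ncL hE x y)
      (mem_nc_conj (mem_nc_conj (mem_nc_commutator (comm_mem_ncL hE x z) y) z) y)
  rw [hc.eq, mul_assoc (y * (z * ⁅⁅x,z⁆,y⁆ * z⁻¹) * y⁻¹), mul_inv_cancel, mul_one] at h0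
  have h1 := cancel_left h0
  have h2 : (y * (z * ⁅⁅x,z⁆,y⁆ * z⁻¹) * y⁻¹)⁻¹ = y * (z * ⁅⁅x,z⁆,y⁆⁻¹ * z⁻¹) * y⁻¹ := by
    group
  rw [h2] at h1
  have h3 := mul_left_cancel (mul_right_cancel h1)
  rw [h3]

private lemma f_mem_ncL (x y z : G) : ⁅⁅x,y⁆,z⁆ ∈ Subgroup.normalClosure ({x} : Set G) :=
  mem_nc_commutator (comm_mem_ncL hE x y) z

private lemma f_mem_ncM (x y z : G) : ⁅⁅x,y⁆,z⁆ ∈ Subgroup.normalClosure ({y} : Set G) :=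
  mem_nc_commutator (comm_mem_ncR hE x y) z

private lemma f_mem_ncR (x y z : G) : ⁅⁅x,y⁆,z⁆ ∈ Subgroup.normalClosure ({z} : Set G) := by
  rw [star hE]
  exact mem_nc_conj (inv_mem (mem_nc_commutator (comm_mem_ncR hE x z) y)) z

private lemma skew23 (x y z : G) : ⁅⁅x,y⁆,z⁆ = ⁅⁅x,z⁆,y⁆⁻¹ := by
  rw [star hE]
  have hc : Commute z ⁅⁅x,z⁆,y⁆⁻¹ :=
    (nc_comm hE (x := z) (mem_nc_self z) (f_mem_ncM hE x z y)).inv_right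
  rw [hc.eq, mul_assoc, mul_inv_cancel, mul_one]

private lemma skew12 (x y z : G) : ⁅⁅y,x⁆,z⁆ = ⁅⁅x,y⁆,z⁆⁻¹ := by
  have h1 : ⁅⁅x,y⁆⁻¹, z⁆ = ⁅x,y⁆⁻¹ * ⁅⁅x,y⁆,z⁆⁻¹ * ⁅x,y⁆ := by group
  have hc : Commute ⁅x,y⁆⁻¹ ⁅⁅x,y⁆,z⁆⁻¹ :=
    ((nc_comm hE (x := x) (comm_mem_ncL hE x y) (f_mem_ncL hE x y z)).inv_inv)
  rw [← commutatorElement_inv x y, h1, hc.eq, mul_assoc, inv_mul_cancel, mul_one]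

private lemma cyc (x y z : G) : ⁅⁅x,y⁆,z⁆ = ⁅⁅y,z⁆,x⁆ := by
  rw [show ⁅⁅x,y⁆,z⁆ = ⁅⁅y,x⁆,z⁆⁻¹ by rw [skew12 hE]]
  rw [skew23 hE y x z]
  group

private lemma hall_witt_reduced (a b c : G) :
    ⁅⁅a,b⁆,c⁆ * ⁅⁅b,c⁆,a⁆ * ⁅⁅c,a⁆,b⁆ = 1 := by
  have HW : ⁅⁅a,b⁆, b*c*b⁻¹⁆ * ⁅⁅b,c⁆, c*a*c⁻¹⁆ * ⁅⁅c,a⁆, a*b*a⁻¹⁆ = 1 := by group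
  have red : ∀ u v w : G, Commute ⁅u,v⁆ v → Commute v ⁅⁅u,v⁆,w⁆ →
      ⁅⁅u,v⁆, v*w*v⁻¹⁆ = ⁅⁅u,v⁆,w⁆ := by
    intro u v w h1 h2
    have e : ⁅⁅u,v⁆, v*w*v⁻¹⁆ = v * ⁅v⁻¹*⁅u,v⁆*v, w⁆ * v⁻¹ := by group
    rw [e]
    have e2 : v⁻¹*⁅u,v⁆*v = ⁅u,v⁆ := by
      rw [mul_assoc, h1.eq, ← mul_assoc, inv_mul_cancel, one_mul]
    rw [e2, h2.eq]; group
  rw [red a b c (commutatorElement_eq_one_iff_commute.mp (hE a b))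
        (nc_comm hE (x := b) (mem_nc_self b) (f_mem_ncM hE a b c)),
      red b c a (commutatorElement_eq_one_iff_commute.mp (hE b c))
        (nc_comm hE (x := c) (mem_nc_self c) (f_mem_ncM hE b c a)),
      red c a b (commutatorElement_eq_one_iff_commute.mp (hE c a))
        (nc_comm hE (x := a) (mem_nc_self a) (f_mem_ncM hE c a b))] at HW
  exact HW

private lemma engel_cube (a b c : G) : ⁅⁅a,b⁆,c⁆ ^ 3 = 1 := by
  have h := hall_witt_reduced hE a b c
  rw [← cyc hE a b c, cyc hE c a b] at h
  rw [pow_succ, pow_succ, pow_one]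
  exact h

private lemma powL (a b : G) (n : ℕ) : ⁅a^n, b⁆ = ⁅a,b⁆^n := by
  have key : ∀ m : ℕ, a^m * b * a⁻¹^m = ⁅a,b⁆^m * b := by
    intro m
    induction m with
    | zero => simp
    | succ k ih =>
      have hca : Commute (⁅a,b⁆^k) a := ((commLeft hE a b).pow_left k)
      calc a^(k+1) * b * a⁻¹^(k+1) = a * (a^k * b * a⁻¹^k) * a⁻¹ := by
            rw [pow_succ' a, pow_succ a⁻¹]; group
        _ = a * (⁅a,b⁆^k * b) * a⁻¹ := by rw [ih]
        _ = ⁅a,b⁆^k * (a * b * a⁻¹) := by rw [← mul_assoc, ← hca.eq]; group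
        _ = ⁅a,b⁆^k * (⁅a,b⁆ * b) := by congr 1; group
        _ = ⁅a,b⁆^(k+1) * b := by rw [pow_succ]; group
  have : ⁅a^n, b⁆ = (a^n * b * a⁻¹^n) * b⁻¹ := by rw [inv_pow]; group
  rw [this, key n]; group

private lemma powR (a b : G) (n : ℕ) : ⁅a, b^n⁆ = ⁅a,b⁆^n := by
  have h1 : a * b * a⁻¹ = ⁅a,b⁆ * b := by group
  have h2 : a * b^n * a⁻¹ = (a*b*a⁻¹)^n := by rw [conj_pow]
  have h3 : (⁅a,b⁆ * b)^n = ⁅a,b⁆^n * b^n := (commRight hE a b).mul_pow n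
  have : ⁅a, b^n⁆ = (a * b^n * a⁻¹) * b⁻¹^n := by rw [inv_pow]; group
  rw [this, h2, h1, h3, inv_pow]; group

private lemma collect (a b : G) (n : ℕ) :
    (a*b)^n = a^n * b^n * ⁅b,a⁆^(n.choose 2) := by
  have hua : Commute ⁅b,a⁆ a := commRight hE b a
  have hub : Commute ⁅b,a⁆ b := commLeft hE b a
  have s1 : ∀ (j : ℕ) (X : G), ⁅b,a⁆^j * (a * X) = a * (⁅b,a⁆^j * X) := by
    intro j X; rw [← mul_assoc, ((hua.pow_left j).eq), mul_assoc]
  have s2 : ∀ (j m : ℕ) (X : G), ⁅b,a⁆^j * (b^m * X) = b^m * (⁅b,a⁆^j * X) := by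
    intro j m X; rw [← mul_assoc, (((hub.pow_right m).pow_left j).eq), mul_assoc]
  have s2b : ∀ (j : ℕ) (X : G), ⁅b,a⁆^j * (b * X) = b * (⁅b,a⁆^j * X) := by
    intro j X; rw [← mul_assoc, ((hub.pow_left j).eq), mul_assoc]
  have s4 : ∀ (j : ℕ), ⁅b,a⁆^j * b = b * ⁅b,a⁆^j := fun j => ((hub.pow_left j).eq)
  induction n with
  | zero => simp
  | succ k ih =>
    have e1 : b^k * a = ⁅b,a⁆^k * (a * b^k) := by
      rw [← powL hE b a k]; group
    have se : ∀ X : G, b^k * (a * X) = a * (b^k * (⁅b,a⁆^k * X)) := by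
      intro X
      rw [← mul_assoc, e1, mul_assoc, mul_assoc, s1, s2]
    calc (a*b)^(k+1) = (a^k * b^k * ⁅b,a⁆^(k.choose 2)) * (a*b) := by
          rw [pow_succ, ih]
      _ = a^k * (b^k * (⁅b,a⁆^(k.choose 2) * (a * b))) := by
          simp only [mul_assoc]
      _ = a^k * (a * (b^k * (⁅b,a⁆^k * (b * ⁅b,a⁆^(k.choose 2))))) := by
          rw [s1, s4, se]
      _ = a^(k+1) * b^(k+1) * ⁅b,a⁆^((k+1).choose 2) := by
          rw [s2b, ← pow_add, Nat.choose_succ_succ, Nat.choose_one_right]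
          simp only [← mul_assoc, ← pow_succ]

/-- for odd q, the set of q-th powers is closed under the group operations -/
private lemma qpow_closed {q : ℕ} (hq : Odd q) {w : G}
    (hw : w ∈ closure {x : G | ∃ y : G, y ^ q = x}) : ∃ y : G, y ^ q = w := by
  induction hw using closure_induction with
  | mem x hx => exact hx
  | one => exact ⟨1, one_pow q⟩
  | mul x y _ _ hx hy =>
    obtain ⟨y1, rfl⟩ := hx
    obtain ⟨y2, rfl⟩ := hy
    obtain ⟨m, hm⟩ := hq
    have hch : q.choose 2 = q * m := by
      rw [Nat.choose_two_right]
      have : q - 1 = 2 * m := by omega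
      rw [this, show q * (2*m) = q * m * 2 by ring, Nat.mul_div_cancel _ (by norm_num)]
    refine ⟨(y1*y2) * (⁅y2,y1⁆⁻¹)^m, ?_⟩
    have hu12 : Commute ⁅y2,y1⁆ (y1*y2) :=
      (commRight hE y2 y1).mul_right (commLeft hE y2 y1)
    have hc : Commute (y1*y2) ((⁅y2,y1⁆⁻¹)^m) := (hu12.symm.inv_right.pow_right m)
    rw [hc.mul_pow, collect hE y1 y2 q, hch]
    rw [inv_pow, inv_pow, ← pow_mul, mul_comm m q]
    group
  | inv x _ hx =>
    obtain ⟨y, rfl⟩ := hx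
    exact ⟨y⁻¹, by rw [inv_pow]⟩

end Engel

private lemma z2_commutes_comm {g : G} (hg : g ∈ Subgroup.upperCentralSeries G 2) :
    commutator G ≤ Subgroup.centralizer {g} := by
  have hgx : ∀ x : G, ⁅g,x⁆ ∈ center G := by
    intro x
    have h := (Subgroup.mem_upperCentralSeries_succ_iff (n := 1)).mp hg x
    rwa [Subgroup.upperCentralSeries_one] at h
  have hcen : ∀ x : G, ∀ u : G, u * ⁅g,x⁆ = ⁅g,x⁆ * u := fun x u =>
    Subgroup.mem_center_iff.mp (hgx x) u
  have hcen' : ∀ x : G, ∀ u : G, u * ⁅g,x⁆⁻¹ = ⁅g,x⁆⁻¹ * u := fun x u =>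
    Subgroup.mem_center_iff.mp (inv_mem (hgx x)) u
  have hom : ∀ x y : G, ⁅g, x*y⁆ = ⁅g,x⁆ * ⁅g,y⁆ := by
    intro x y
    have e : ⁅g, x*y⁆ = ⁅g,x⁆ * (x * ⁅g,y⁆ * x⁻¹) := by group
    rw [e, hcen y x]; group
  have hinv : ∀ x : G, ⁅g, x⁻¹⁆ = ⁅g,x⁆⁻¹ := by
    intro x
    have e : ⁅g, x⁻¹⁆ = x⁻¹ * ⁅g,x⁆⁻¹ * x := by group
    rw [e, mul_assoc, ← hcen' x x, ← mul_assoc, inv_mul_cancel, one_mul]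
  have htriv : ∀ a b : G, ⁅g, ⁅a,b⁆⁆ = 1 := by
    intro a b
    have e : ⁅g, ⁅a,b⁆⁆ = ⁅g, ((a*b)*a⁻¹)*b⁻¹⁆ := by
      congr 1
    rw [e, hom, hom, hom, hinv, hinv]
    rw [mul_assoc ⁅g,a⁆ ⁅g,b⁆ ⁅g,a⁆⁻¹, hcen' a ⁅g,b⁆]
    group
  rw [commutator_eq_closure]
  refine (closure_le _).mpr ?_
  intro c hc
  obtain ⟨a, b, rfl⟩ := hc
  rw [SetLike.mem_coe, Subgroup.mem_centralizer_singleton_iff]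
  exact (commutatorElement_eq_one_iff_commute.mp (htriv a b)).symm.eq

private lemma commutator_le_center_of (h : ∀ a b : G, ⁅a,b⁆ ∈ center G) :
    commutator G ≤ center G := by
  rw [commutator_eq_closure]
  refine (closure_le _).mpr ?_
  rintro c ⟨a, b, rfl⟩
  exact h a b

section Engel
variable (hE : ∀ x y : G, ⁅⁅x, y⁆, y⁆ = 1)
include hE

/-- forward lemma : `q`-th powers of second-centre elements are central -/
private lemma z2_pow_central {q : ℕ} (hq : ∀ x : G, x ^ q ∈ commutator G)
    {g : G} (hg : g ∈ Subgroup.upperCentralSeries G 2) : g ^ q ∈ center G := by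
  rw [Subgroup.mem_center_iff]
  intro u
  have h1 : ⁅g^q, u⁆ = 1 := by
    rw [powL hE, ← powR hE]
    exact commutatorElement_eq_one_iff_commute.mpr
      ((Subgroup.mem_centralizer_singleton_iff.mp
        (z2_commutes_comm hg (hq u))).symm)
  exact (commutatorElement_eq_one_iff_commute.mp h1).symm.eq

/-- reverse lemma : if `g^q` is central then `g` is in the second centre -/
private lemma pow_central_mem_z2 {p r : ℕ}
    (hΩ : Subgroup.closure {x : G | x ^ p ^ r = 1} ≤ Subgroup.center G)
    {g : G} (hg : g ^ p ^ r ∈ center G) : g ∈ Subgroup.upperCentralSeries G 2 := by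
  rw [show (2 : ℕ) = 1 + 1 from rfl, Subgroup.mem_upperCentralSeries_succ_iff]
  intro y
  rw [Subgroup.upperCentralSeries_one]
  apply hΩ
  apply Subgroup.subset_closure
  show ⁅g, y⁆ ^ p ^ r = 1
  rw [← powL hE]
  have hcom : Commute (g ^ p ^ r) y :=
    (show Commute y (g ^ p ^ r) from Subgroup.mem_center_iff.mp hg y).symm
  exact commutatorElement_eq_one_iff_commute.mpr hcom

end Engel

end PEaux

open Subgroup PEaux in
/-- If `G` is a `pℰ`-group with `exp (G/G') = p ^ r`, then the subgroup
generated by the `p ^ r`-th powers of elements of the second center `Z₂(G)`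
equals `Z(G) ⊓ G ^ (p ^ r)`.  In particular, if `G` is nilpotent of class
exactly 3, then the exponent of `Z₂(G)/Z(G)` (realized as the image of
`Z₂(G)` in `G/Z(G)`) equals `3 ^ r`. -/
theorem pEpsilonGroup_second_center_powers
    (p r : ℕ) (hp : p.Prime) {G : Type*} [Group G] [Finite G]
    (hG : IsPEpsilonGroup p G)
    (hr : Monoid.exponent (G ⧸ commutator G) = p ^ r) :
    (Subgroup.closure {x : G | ∃ g ∈ _root_.upperCentralSeries G 2, g ^ p ^ r = x} =
      Subgroup.center G ⊓ Subgroup.closure {x : G | ∃ g : G, g ^ p ^ r = x}) ∧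
    (((⊤ : Subgroup G).lowerCentralSeries 3 = ⊥ ∧ (⊤ : Subgroup G).lowerCentralSeries 2 ≠ ⊥) →
      Monoid.exponent
        ((_root_.upperCentralSeries G 2).map (QuotientGroup.mk' (Subgroup.center G)))
        = 3 ^ r) := by
  delta _root_.upperCentralSeries
  obtain ⟨hpG, hE, r', hΩ', hexp'⟩ := hG
  have hrr : r' = r := Nat.pow_right_injective hp.two_le (hexp'.symm.trans hr)
  rw [hrr] at hΩ'
  clear hexp' hrr
  have hxq : ∀ x : G, x ^ p ^ r ∈ commutator G := by
    intro x
    have h1 : (↑x : G ⧸ commutator G) ^ p ^ r = 1 := by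
      rw [← hr]; exact Monoid.pow_exponent_eq_one _
    rwa [← QuotientGroup.mk_pow, QuotientGroup.eq_one_iff] at h1
  -- a characterisation of `G' ≤ Z(G)` from vanishing triple commutators
  have hlcs2_bot : (∀ a b c : G, ⁅⁅a,b⁆,c⁆ = 1) → (⊤ : Subgroup G).lowerCentralSeries 2 = ⊥ := by
    intro hf
    have hGZ : commutator G ≤ Subgroup.center G := by
      apply commutator_le_center_of
      intro a b
      rw [Subgroup.mem_center_iff]
      intro u
      exact (commutatorElement_eq_one_iff_commute.mp (hf a b u)).symm.eq
    have hstep : (⊤ : Subgroup G).lowerCentralSeries 2 = ⁅commutator G, (⊤ : Subgroup G)⁆ := by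
      rw [show (2 : ℕ) = 1 + 1 from rfl, Subgroup.lowerCentralSeries_succ, Subgroup.top_lowerCentralSeries_one]
    rw [hstep, Subgroup.commutator_eq_bot_iff_le_centralizer]
    exact hGZ.trans (Subgroup.center_le_centralizer _)
  constructor
  · -- part 1
    rcases hp.eq_two_or_odd' with hp2 | hpodd
    · -- p = 2 : the group has class ≤ 2
      have hf1 : ∀ a b c : G, ⁅⁅a,b⁆,c⁆ = 1 := by
        intro a b c
        obtain ⟨k, hk⟩ := hpG ⁅⁅a,b⁆,c⁆
        have h3 : orderOf ⁅⁅a,b⁆,c⁆ ∣ 3 := orderOf_dvd_of_pow_eq_one (engel_cube hE a b c)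
        have h2 : orderOf ⁅⁅a,b⁆,c⁆ ∣ p^k := orderOf_dvd_of_pow_eq_one hk
        have hcop : Nat.Coprime 3 (p^k) := by
          subst hp2; exact Nat.Coprime.pow_right k (by norm_num)
        have : orderOf ⁅⁅a,b⁆,c⁆ ∣ 1 := hcop ▸ Nat.dvd_gcd h3 h2
        rw [Nat.dvd_one] at this
        exact orderOf_eq_one_iff.mp this
      have hGZ : commutator G ≤ Subgroup.center G := by
        apply commutator_le_center_of
        intro a b
        rw [Subgroup.mem_center_iff]
        intro u
        exact (commutatorElement_eq_one_iff_commute.mp (hf1 a b u)).symm.eq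
      have hz2 : Subgroup.upperCentralSeries G 2 = ⊤ := by
        rw [eq_top_iff]
        intro g _
        rw [show (2 : ℕ) = 1 + 1 from rfl, Subgroup.mem_upperCentralSeries_succ_iff]
        intro y
        rw [Subgroup.upperCentralSeries_one]
        refine hGZ ?_
        rw [commutator_eq_closure]
        exact Subgroup.subset_closure ⟨g, y, rfl⟩
      have hsets : {x : G | ∃ g ∈ Subgroup.upperCentralSeries G 2, g ^ p ^ r = x} =
          {x : G | ∃ g : G, g ^ p ^ r = x} := by
        ext w
        simp [hz2]
      rw [hsets]
      have hle : Subgroup.closure {x : G | ∃ g : G, g ^ p ^ r = x} ≤ Subgroup.center G := by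
        refine (Subgroup.closure_le _).mpr ?_
        rintro w ⟨g, rfl⟩
        exact hGZ (hxq g)
      exact (inf_eq_right.mpr hle).symm
    · -- p odd
      have hqodd : Odd (p ^ r) := hpodd.pow
      apply le_antisymm
      · refine (Subgroup.closure_le _).mpr ?_
        rintro w ⟨g, hg, rfl⟩
        rw [SetLike.mem_coe, Subgroup.mem_inf]
        exact ⟨z2_pow_central hE hxq hg, Subgroup.subset_closure ⟨g, rfl⟩⟩
      · intro z hz
        rw [Subgroup.mem_inf] at hz
        obtain ⟨y, rfl⟩ := qpow_closed hE hqodd hz.2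
        exact Subgroup.subset_closure ⟨y, pow_central_mem_z2 hE hΩ' hz.1, rfl⟩
  · -- part 2
    rintro ⟨hc3, hc2⟩
    by_cases hf : ∀ a b c : G, ⁅⁅a,b⁆,c⁆ = 1
    · exact absurd (hlcs2_bot hf) hc2
    push_neg at hf
    obtain ⟨a, b, c, hfne⟩ := hf
    have h3 : orderOf ⁅⁅a,b⁆,c⁆ = 3 := by
      have hdvd : orderOf ⁅⁅a,b⁆,c⁆ ∣ 3 := orderOf_dvd_of_pow_eq_one (engel_cube hE a b c)
      rcases (Nat.Prime.eq_one_or_self_of_dvd Nat.prime_three _ hdvd) with h1 | h1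
      · exact absurd (orderOf_eq_one_iff.mp h1) hfne
      · exact h1
    have hp3 : p = 3 := by
      obtain ⟨k, hk⟩ := hpG ⁅⁅a,b⁆,c⁆
      have h31 : (3:ℕ) ∣ p^k := h3 ▸ orderOf_dvd_of_pow_eq_one hk
      have h32 : (3:ℕ) ∣ p := Nat.Prime.dvd_of_dvd_pow Nat.prime_three h31
      exact ((Nat.prime_dvd_prime_iff_eq Nat.prime_three hp).mp h32).symm
    subst hp3
    rcases Nat.eq_zero_or_pos r with hr0 | hrpos
    · exfalso
      subst hr0
      have hct : commutator G = ⊤ := by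
        rw [eq_top_iff]
        intro x _
        have := hxq x
        rwa [pow_zero, pow_one] at this
      have hl1 : (⊤ : Subgroup G).lowerCentralSeries 1 = ⊤ := by rw [Subgroup.top_lowerCentralSeries_one, hct]
      have hlstep : ∀ n : ℕ, (⊤ : Subgroup G).lowerCentralSeries (n+1) = ⁅(⊤ : Subgroup G).lowerCentralSeries n, ⊤⁆ := by
        intro n
        rw [Subgroup.lowerCentralSeries_succ]
      have hl2 : (⊤ : Subgroup G).lowerCentralSeries 2 = ⊤ := by
        rw [show (2 : ℕ) = 1 + 1 from rfl, hlstep 1, hl1, ← _root_.commutator_def, hct]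
      have hl3 : (⊤ : Subgroup G).lowerCentralSeries 3 = ⊤ := by
        rw [show (3 : ℕ) = 2 + 1 from rfl, hlstep 2, hl2, ← _root_.commutator_def, hct]
      rw [hl3] at hc3
      rw [hl2, hc3] at hc2
      exact hc2 rfl
    -- now p = 3, r ≥ 1
    have hub : ∀ m : ((Subgroup.upperCentralSeries G 2).map (QuotientGroup.mk' (Subgroup.center G))),
        m ^ 3 ^ r = 1 := by
      rintro ⟨mq, hmq⟩
      rw [Subgroup.mem_map] at hmq
      obtain ⟨g, hg, rfl⟩ := hmq
      have hc : g ^ 3 ^ r ∈ Subgroup.center G := z2_pow_central hE hxq hg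
      rw [Subtype.ext_iff, SubmonoidClass.coe_pow, OneMemClass.coe_one, ← map_pow]
      exact (QuotientGroup.eq_one_iff _).mpr hc
    have hdvd : Monoid.exponent
        ((Subgroup.upperCentralSeries G 2).map (QuotientGroup.mk' (Subgroup.center G))) ∣ 3 ^ r :=
      Monoid.exponent_dvd_of_forall_pow_eq_one hub
    have hnotdvd : ¬ (Monoid.exponent
        ((Subgroup.upperCentralSeries G 2).map (QuotientGroup.mk' (Subgroup.center G))) ∣ 3 ^ (r-1)) := by
      intro hsm
      have hzz : ∀ g : G, g ∈ Subgroup.upperCentralSeries G 2 → g ^ 3 ^ (r-1) ∈ Subgroup.center G := by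
        intro g hg
        have hm : (QuotientGroup.mk' (Subgroup.center G)) g ∈
            (Subgroup.upperCentralSeries G 2).map (QuotientGroup.mk' (Subgroup.center G)) :=
          Subgroup.mem_map_of_mem _ hg
        have h1 : ((⟨_, hm⟩ : ((Subgroup.upperCentralSeries G 2).map
            (QuotientGroup.mk' (Subgroup.center G))))) ^ 3 ^ (r-1) = 1 :=
          orderOf_dvd_iff_pow_eq_one.mp ((Monoid.order_dvd_exponent _).trans hsm)
        rw [Subtype.ext_iff, SubmonoidClass.coe_pow, OneMemClass.coe_one, ← map_pow] at h1
        exact (QuotientGroup.eq_one_iff _).mp h1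
      have hx3 : ∀ x : G, x ^ (3:ℕ) ∈ Subgroup.upperCentralSeries G 2 := by
        intro x
        rw [show (2 : ℕ) = 1 + 1 from rfl, Subgroup.mem_upperCentralSeries_succ_iff]
        intro y
        rw [Subgroup.upperCentralSeries_one]
        show ⁅x ^ (3:ℕ), y⁆ ∈ Subgroup.center G
        rw [powL hE]
        rw [Subgroup.mem_center_iff]
        intro u
        have h1 : ⁅⁅x,y⁆ ^ (3:ℕ), u⁆ = 1 := by rw [powL hE, engel_cube hE]
        exact (commutatorElement_eq_one_iff_commute.mp h1).symm.eq
      have hcc : ∀ x y : G, ⁅x,y⁆ ∈ Subgroup.center G := by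
        intro x y
        have hxq' : x ^ 3 ^ r ∈ Subgroup.center G := by
          have h1 := hzz (x ^ (3:ℕ)) (hx3 x)
          rw [← pow_mul] at h1
          rwa [show 3 * 3 ^ (r-1) = 3 ^ r from by
            rw [← pow_succ']; congr 1; omega] at h1
        have h1 : ⁅x,y⁆ ^ 3 ^ r = 1 := by
          rw [← powL hE]
          exact commutatorElement_eq_one_iff_commute.mpr
            ((show Commute y (x ^ 3 ^ r) from
              Subgroup.mem_center_iff.mp hxq' y).symm)
        exact hΩ' (Subgroup.subset_closure h1)
      apply hc2
      apply hlcs2_bot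
      intro a' b' c'
      have : ⁅a',b'⁆ ∈ Subgroup.center G := hcc a' b'
      exact commutatorElement_eq_one_iff_commute.mpr
        ((show Commute c' ⁅a',b'⁆ from Subgroup.mem_center_iff.mp this c').symm)
    obtain ⟨s, hsle, hs⟩ := (Nat.dvd_prime_pow Nat.prime_three).mp hdvd
    rcases eq_or_lt_of_le hsle with heq | hlt
    · rw [hs, heq]
    · exact absurd (hs ▸ pow_dvd_pow 3 (by omega : s ≤ r - 1)) hnotdvd
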